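/- The gradient of the expected error-corrected score with respect to γ vanishes at the true parameters; explicitly, as a vector identity in ℝ^p, E[(Y − D·θ0 − Z'β0)·Z] + τ0·β0 = 0. -/

import Mathlib

/-!
Substituting the model, the residual `Y − D·θ0 − Z'β0` equals `U − A'β0`, and `Z = X + A`.
Expanding `E[(U − A'β0)(X_j + A_j)]`, the three cross moments `E[U X_j]`, `E[U A_j]` and
`E[A X_j]` vanish, while `E[(A'β0) A_j] = τ0 β0_j` by isotropy of the measurement error; this is
exactly the term the correction `τ0 β0` cancels.
-/

open MeasureTheory

section SecondMoments

variable {Ω ι : Type*} [MeasurableSpace Ω] {μ : Measure Ω}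

lemma integral_mul_add_of_memLp_two {f g h : Ω → ℝ} (hf : MemLp f 2 μ) (hg : MemLp g 2 μ)
    (hh : MemLp h 2 μ) :
    ∫ ω, f ω * (g ω + h ω) ∂μ = ∫ ω, f ω * g ω ∂μ + ∫ ω, f ω * h ω ∂μ := by
  simp only [mul_add]
  exact integral_add (hf.integrable_mul hg) (hf.integrable_mul hh)

lemma integral_sub_mul_of_memLp_two {f g h : Ω → ℝ} (hf : MemLp f 2 μ) (hg : MemLp g 2 μ)
    (hh : MemLp h 2 μ) :
    ∫ ω, (f ω - g ω) * h ω ∂μ = ∫ ω, f ω * h ω ∂μ - ∫ ω, g ω * h ω ∂μ := by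
  simp only [sub_mul]
  exact integral_sub (hf.integrable_mul hh) (hg.integrable_mul hh)

variable [Fintype ι]

lemma memLp_two_sum_mul (c : ι → ℝ) {F : Ω → ι → ℝ} (hF : ∀ k, MemLp (fun ω => F ω k) 2 μ) :
    MemLp (fun ω => ∑ k, c k * F ω k) 2 μ :=
  memLp_finsetSum _ fun k _ => (hF k).const_mul (c k)

lemma integral_sum_mul_of_memLp_two (c : ι → ℝ) {F : Ω → ι → ℝ} {g : Ω → ℝ}
    (hF : ∀ k, MemLp (fun ω => F ω k) 2 μ) (hg : MemLp g 2 μ) :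
    ∫ ω, (∑ k, c k * F ω k) * g ω ∂μ = ∑ k, c k * ∫ ω, F ω k * g ω ∂μ := by
  simp only [Finset.sum_mul, mul_assoc]
  have hFg (k : ι) : Integrable (fun ω => F ω k * g ω) μ := (hF k).integrable_mul hg
  rw [integral_finsetSum _ fun k _ => (hFg k).const_mul (c k)]
  simp only [integral_const_mul]

lemma integral_sum_mul_eq_zero_of_orthogonal (c : ι → ℝ) {F : Ω → ι → ℝ} {g : Ω → ℝ}
    (hF : ∀ k, MemLp (fun ω => F ω k) 2 μ) (hg : MemLp g 2 μ)
    (horth : ∀ k, ∫ ω, F ω k * g ω ∂μ = 0) :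
    ∫ ω, (∑ k, c k * F ω k) * g ω ∂μ = 0 := by
  simp [integral_sum_mul_of_memLp_two c hF hg, horth]

lemma integral_sum_mul_of_isotropic [DecidableEq ι] (c : ι → ℝ) {A : Ω → ι → ℝ} {τ : ℝ}
    (hA : ∀ k, MemLp (fun ω => A ω k) 2 μ)
    (hAA : ∀ j k, ∫ ω, A ω j * A ω k ∂μ = if j = k then τ else 0) (j : ι) :
    ∫ ω, (∑ k, c k * A ω k) * A ω j ∂μ = τ * c j := by
  rw [integral_sum_mul_of_memLp_two c hA (hA j)]
  simp [hAA, mul_comm]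

end SecondMoments

theorem corrected_score_gamma_gradient_vanishes_general
    {Ω : Type*} [MeasurableSpace Ω] {μ : Measure Ω}
    {p : ℕ} (Y D U : Ω → ℝ) (X A Z : Ω → Fin p → ℝ)
    (θ0 τ0 : ℝ) (β0 : Fin p → ℝ)
    (hY : ∀ ω, Y ω = θ0 * D ω + (∑ j, β0 j * X ω j) + U ω)
    (hZ : ∀ ω j, Z ω j = X ω j + A ω j)
    -- square integrability of all the random variables involved
    (hL2U : MemLp U 2 μ)
    (hL2X : ∀ j, MemLp (fun ω => X ω j) 2 μ)
    (hL2A : ∀ j, MemLp (fun ω => A ω j) 2 μ)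
    -- measurement-error moments: E[A] = 0 and E[AA'] = τ0 I
    (hAA : ∀ j k, ∫ ω, A ω j * A ω k ∂μ = if j = k then τ0 else 0)
    -- orthogonality moment conditions
    (hUX : ∀ j, ∫ ω, U ω * X ω j ∂μ = 0)
    (hUA : ∀ j, ∫ ω, U ω * A ω j ∂μ = 0)
    (hXA : ∀ j k, ∫ ω, X ω j * A ω k ∂μ = 0) :
    ∀ j, (∫ ω, (Y ω - D ω * θ0 - ∑ k, β0 k * Z ω k) * Z ω j ∂μ) + τ0 * β0 j = 0 := by
  intro j
  have hresidual : ∀ ω, Y ω - D ω * θ0 - ∑ k, β0 k * Z ω k = U ω - ∑ k, β0 k * A ω k := by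
    intro ω
    simp only [hY, hZ, mul_add, Finset.sum_add_distrib]
    ring
  have hAX : ∀ k, ∫ ω, A ω k * X ω j ∂μ = 0 := fun k => by
    simpa only [mul_comm] using hXA j k
  have hS := memLp_two_sum_mul β0 hL2A
  have hZj : MemLp (fun ω => X ω j + A ω j) 2 μ := (hL2X j).add (hL2A j)
  simp_rw [hresidual, hZ]
  rw [integral_sub_mul_of_memLp_two hL2U hS hZj,
    integral_mul_add_of_memLp_two hL2U (hL2X j) (hL2A j),
    integral_mul_add_of_memLp_two hS (hL2X j) (hL2A j), hUX, hUA,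
    integral_sum_mul_eq_zero_of_orthogonal β0 hL2A (hL2X j) hAX,
    integral_sum_mul_of_isotropic β0 hL2A hAA j]
  ring

/-- The gradient of the expected error-corrected score with respect to γ
vanishes at the true parameters: as a vector identity in ℝ^p,
`E[(Y − D·θ0 − Z'β0)·Z] + τ0·β0 = 0`. -/
theorem corrected_score_gamma_gradient_vanishes
    {Ω : Type*} [MeasurableSpace Ω] {μ : Measure Ω} [IsProbabilityMeasure μ]
    {p : ℕ} (Y D U V : Ω → ℝ) (X A Z : Ω → Fin p → ℝ)
    (θ0 τ0 : ℝ) (β0 γ0 : Fin p → ℝ)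
    (hτ0 : 0 < τ0)
    (hY : ∀ ω, Y ω = θ0 * D ω + (∑ j, β0 j * X ω j) + U ω)
    (hD : ∀ ω, D ω = (∑ j, γ0 j * X ω j) + V ω)
    (hZ : ∀ ω j, Z ω j = X ω j + A ω j)
    -- square integrability of all the random variables involved
    (hL2Y : MemLp Y 2 μ) (hL2D : MemLp D 2 μ)
    (hL2U : MemLp U 2 μ) (hL2V : MemLp V 2 μ)
    (hL2X : ∀ j, MemLp (fun ω => X ω j) 2 μ)
    (hL2A : ∀ j, MemLp (fun ω => A ω j) 2 μ)
    -- measurement-error moments: E[A] = 0 and E[AA'] = τ0 I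
    (hA0 : ∀ j, ∫ ω, A ω j ∂μ = 0)
    (hAA : ∀ j k, ∫ ω, A ω j * A ω k ∂μ = if j = k then τ0 else 0)
    -- orthogonality moment conditions
    (hUV : ∫ ω, U ω * V ω ∂μ = 0)
    (hUX : ∀ j, ∫ ω, U ω * X ω j ∂μ = 0)
    (hVX : ∀ j, ∫ ω, V ω * X ω j ∂μ = 0)
    (hUA : ∀ j, ∫ ω, U ω * A ω j ∂μ = 0)
    (hVA : ∀ j, ∫ ω, V ω * A ω j ∂μ = 0)
    (hDA : ∀ j, ∫ ω, D ω * A ω j ∂μ = 0)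
    (hXA : ∀ j k, ∫ ω, X ω j * A ω k ∂μ = 0) :
    ∀ j, (∫ ω, (Y ω - D ω * θ0 - ∑ k, β0 k * Z ω k) * Z ω j ∂μ) + τ0 * β0 j = 0 :=
  corrected_score_gamma_gradient_vanishes_general Y D U X A Z θ0 τ0 β0 hY hZ hL2U hL2X hL2A hAA hUX
    hUA hXA
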